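/- Let s₊, s₋ be positive real numbers with s₊ s₋ = 2 and s₊ ≠ s₋. Then (1 + s₊²)/s₊^{4/3} ≠ (1 + s₋²)/s₋^{4/3}, where s^{4/3} = (s⁴)^{1/3} with the real cube root. -/

import Mathlib

/-- The real cube root. -/
noncomputable def cbrt (x : ℝ) : ℝ :=
  if 0 ≤ x then x ^ ((1 : ℝ) / 3) else -((-x) ^ ((1 : ℝ) / 3))

lemma cbrt_pow_three {x : ℝ} (hx : 0 ≤ x) : cbrt x ^ 3 = x := by
  rw [cbrt, if_pos hx, ← Real.rpow_natCast, ← Real.rpow_mul hx]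
  norm_num

lemma div_cbrt_pow_three (a : ℝ) {x : ℝ} (hx : 0 ≤ x) : (a / cbrt x) ^ 3 = a ^ 3 / x := by
  rw [div_pow, cbrt_pow_three hx]

/-- With `t = s²`, clearing denominators turns the equation into `(t - 2)³ (t + 2) = 0`. -/
lemma sq_eq_two_of_cube_ratio_eq {s : ℝ} (hs : s ≠ 0)
    (h : (1 + s ^ 2) ^ 3 / s ^ 4 = (1 + (2 / s) ^ 2) ^ 3 / (2 / s) ^ 4) : s ^ 2 = 2 := by
  have key : (s ^ 2 - 2) ^ 3 * (s ^ 2 + 2) = 0 := by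
    field_simp at h
    linear_combination -h
  have hcube : (s ^ 2 - 2) ^ 3 = 0 := (mul_eq_zero.mp key).resolve_right (by positivity)
  linarith [pow_eq_zero_iff (n := 3) (by norm_num) |>.mp hcube]

theorem F2_values_distinct_s_general (sp sm : ℝ)
    (hmul : sp * sm = 2) (hne : sp ≠ sm) :
    (1 + sp ^ 2) / cbrt (sp ^ 4) ≠ (1 + sm ^ 2) / cbrt (sm ^ 4) := by
  intro h
  have hsp : sp ≠ 0 := left_ne_zero_of_mul (hmul ▸ two_ne_zero)
  have hsm_eq : sm = 2 / sp := by field_simp; linarith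
  have hcubes := congrArg (· ^ 3) h
  rw [div_cbrt_pow_three _ (by positivity), div_cbrt_pow_three _ (by positivity), hsm_eq] at hcubes
  have hsp_sq : sp ^ 2 = 2 := sq_eq_two_of_cube_ratio_eq hsp hcubes
  exact hne (by rw [hsm_eq]; field_simp; linarith)

/-- If `s₊, s₋ > 0`, `s₊ s₋ = 2` and `s₊ ≠ s₋`, then
`(1 + s₊²)/s₊^{4/3} ≠ (1 + s₋²)/s₋^{4/3}`, where `s^{4/3} = (s⁴)^{1/3}` with the real
cube root. -/
theorem F2_values_distinct_s (sp sm : ℝ)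
    (hsp : 0 < sp) (hsm : 0 < sm) (hmul : sp * sm = 2) (hne : sp ≠ sm) :
    (1 + sp ^ 2) / cbrt (sp ^ 4) ≠ (1 + sm ^ 2) / cbrt (sm ^ 4) :=
  F2_values_distinct_s_general sp sm hmul hne
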